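/- Let Π be a reversible Markov kernel on (X,𝓔) with finite reversing measure m, and let κ be its Cheeger constant. If g ∈ L¹(X,m) takes values in [0,∞) and m({x : g(x) > 0}) ≤ m(X)/2, then 𝓔₁(g) ≥ κ·‖g‖_{m,1}. -/

import Mathlib

/-!
Co-area argument. For `g ≥ 0` and the level sets `A t = {g > t}`,
`|g x - g y| = ∫_{t > 0} |1_{A t} x - 1_{A t} y| dt`, so integrating against `m ⊗ₘ K` expresses
`∫ |g x - g y|` as `∫_{t > 0} (m ⊗ₘ K) (A t ×ˢ (A t)ᶜ ∪ (A t)ᶜ ×ˢ A t) dt = 2 ∫_{t > 0} |∂ A t| dt`,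
the two halves having equal mass by reversibility. For `t > 0` the set `A t` lies in `{g > 0}`,
so `|∂ A t| ≥ κ m (A t)`, and the layer-cake formula `∫ g = ∫_{t > 0} m (A t) dt` concludes.
-/

open MeasureTheory ProbabilityTheory ENNReal

noncomputable section

/-- The `m`-size of the boundary of `A` with respect to the Markov kernel `Π`:
`|∂_Π A|_m = ∫_A Π(x, X∖A) dm(x)`. -/
def boundarySize {X : Type*} [MeasurableSpace X] (K : Kernel X X) (m : Measure X)
    (A : Set X) : ℝ :=
  (∫⁻ x in A, K x Aᶜ ∂m).toReal

/-- The Cheeger constant of the Markov kernel `Π` with respect to `m`: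
`κ = inf { |∂_Π A|_m / m(A) : A measurable, 0 < m(A) ≤ m(X)/2 }`. -/
def cheegerConst {X : Type*} [MeasurableSpace X] (K : Kernel X X) (m : Measure X) : ℝ :=
  sInf { q : ℝ | ∃ A : Set X, MeasurableSet A ∧ 0 < m A ∧ m A ≤ m Set.univ / 2 ∧
    q = boundarySize K m A / (m A).toReal }

/-- The `2`-Dirichlet energy `𝓔₂(f) = (1/2) ∫_{X×X} |f(x) − f(y)|² dμ(x,y)` where
`μ = m ⊗ₘ Π` is the measure on `X × X` determined by `μ(A×B) = ∫_A Π(x,B) dm(x)`. -/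
def dirichletEnergy2 {X : Type*} [MeasurableSpace X] (K : Kernel X X) (m : Measure X)
    (f : X → ℝ) : ℝ :=
  (1 / 2) * ∫ p, (f p.1 - f p.2) ^ 2 ∂(m.compProd K)


open Set
open scoped symmDiff

lemma volume_restrict_Ioi_zero_Iio_symmDiff_Iio {a b : ℝ} (ha : 0 ≤ a) (hb : 0 ≤ b) :
    volume.restrict (Ioi 0) (Iio a ∆ Iio b) = ENNReal.ofReal |a - b| := by
  wlog hba : b ≤ a generalizing a b
  · rw [symmDiff_comm, abs_sub_comm]
    exact this hb ha (le_of_not_ge hba)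
  have hIco : Iio a ∆ Iio b = Ico b a := by
    ext t
    simp only [mem_symmDiff, mem_Iio, mem_Ico]
    constructor
    · rintro (⟨hta, htb⟩ | ⟨htb, hta⟩) <;> constructor <;> linarith
    · rintro ⟨hbt, hta⟩
      exact Or.inl ⟨hta, not_lt.mpr hbt⟩
  rw [Measure.restrict_congr_set Ioi_ae_eq_Ici, hIco, Measure.restrict_apply measurableSet_Ico,
    inter_eq_left.mpr (Ico_subset_Ici_self.trans (Ici_subset_Ici.mpr hb)), Real.volume_Ico,
    abs_of_nonneg (sub_nonneg.mpr hba)]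

theorem lintegral_ofReal_abs_sub_eq_lintegral_measure_symmDiff {Y : Type*} [MeasurableSpace Y]
    (ν : Measure Y) [SFinite ν] {f h : Y → ℝ} (hf : Measurable f) (hh : Measurable h)
    (hf0 : 0 ≤ f) (hh0 : 0 ≤ h) :
    ∫⁻ y, ENNReal.ofReal |f y - h y| ∂ν = ∫⁻ t in Ioi 0, ν ({y | t < f y} ∆ {y | t < h y}) := by
  set S : Set (Y × ℝ) := {p | p.2 < f p.1} ∆ {p | p.2 < h p.1}
  have hS : MeasurableSet S :=
    (measurableSet_lt measurable_snd (hf.comp measurable_fst)).symmDiff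
      (measurableSet_lt measurable_snd (hh.comp measurable_fst))
  calc ∫⁻ y, ENNReal.ofReal |f y - h y| ∂ν
      = ∫⁻ y, volume.restrict (Ioi 0) (Prod.mk y ⁻¹' S) ∂ν :=
        lintegral_congr fun y => (volume_restrict_Ioi_zero_Iio_symmDiff_Iio (hf0 y) (hh0 y)).symm
    _ = (ν.prod (volume.restrict (Ioi 0))) S := (Measure.prod_apply hS).symm
    _ = ∫⁻ t in Ioi 0, ν ({y | t < f y} ∆ {y | t < h y}) := Measure.prod_apply_symm hS

namespace ProbabilityTheory.Kernel

variable {X : Type*} [MeasurableSpace X] {K : Kernel X X} {m : Measure X}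

lemma isReversible_of_integral_mul_comm [IsFiniteKernel K] [IsFiniteMeasure m]
    (hrev : ∀ f g : X → ℝ, Measurable f → Measurable g →
      (∃ C, ∀ x, |f x| ≤ C) → (∃ C, ∀ x, |g x| ≤ C) →
      ∫ x, f x * (∫ y, g y ∂(K x)) ∂m = ∫ x, (∫ y, f y ∂(K x)) * g x ∂m) :
    IsReversible K m := by
  have hbdd (A : Set X) : ∃ C, ∀ x, |A.indicator (1 : X → ℝ) x| ≤ C :=
    ⟨1, fun x => by by_cases hx : x ∈ A <;> simp [hx]⟩
  have hflow {A B : Set X} (hA : MeasurableSet A) (hB : MeasurableSet B) :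
      ∫ x, A.indicator 1 x * (∫ y, B.indicator 1 y ∂(K x)) ∂m
        = (∫⁻ x in A, K x B ∂m).toReal := by
    have hind : (fun x => A.indicator 1 x * ∫ y, B.indicator 1 y ∂(K x))
        = A.indicator fun x => (K x B).toReal := by
      ext x
      by_cases hx : x ∈ A <;> simp [hx, integral_indicator_one hB, Measure.real]
    rw [hind, integral_indicator hA]
    exact integral_toReal (K.measurable_coe hB).aemeasurable
      (ae_of_all _ fun _ => measure_lt_top _ _)
  have hfin {A B : Set X} (hA : MeasurableSet A) (hB : MeasurableSet B) :
      ∫⁻ x in A, K x B ∂m ≠ ∞ := by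
    rw [← Measure.compProd_apply_prod hA hB]
    exact measure_ne_top _ _
  intro A B hA hB
  have h := hrev _ _ (measurable_one.indicator hA) (measurable_one.indicator hB) (hbdd A) (hbdd B)
  simp_rw [mul_comm _ (B.indicator 1 _)] at h
  rwa [hflow hA hB, hflow hB hA, ENNReal.toReal_eq_toReal_iff' (hfin hA hB) (hfin hB hA)] at h

lemma IsReversible.compProd_prod_comm [SFinite m] [IsSFiniteKernel K] (h : IsReversible K m)
    {A B : Set X} (hA : MeasurableSet A) (hB : MeasurableSet B) :
    (m ⊗ₘ K) (A ×ˢ B) = (m ⊗ₘ K) (B ×ˢ A) := by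
  rw [Measure.compProd_apply_prod hA hB, Measure.compProd_apply_prod hB hA, h hA hB]

lemma IsReversible.compProd_symmDiff [SFinite m] [IsSFiniteKernel K] (h : IsReversible K m)
    {A : Set X} (hA : MeasurableSet A) :
    (m ⊗ₘ K) ((Prod.fst ⁻¹' A) ∆ (Prod.snd ⁻¹' A)) = 2 * ∫⁻ x in A, K x Aᶜ ∂m := by
  have hcut : (Prod.fst ⁻¹' A) ∆ (Prod.snd ⁻¹' A) = A ×ˢ Aᶜ ∪ Aᶜ ×ˢ A := by
    ext p
    simp only [mem_symmDiff, mem_preimage, mem_union, mem_prod, mem_compl_iff]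
    tauto
  have hdisj : Disjoint (A ×ˢ Aᶜ) (Aᶜ ×ˢ A) :=
    disjoint_left.mpr fun _ hp hq => hq.1 hp.1
  rw [hcut, measure_union hdisj (hA.compl.prod hA), ← h.compProd_prod_comm hA hA.compl,
    Measure.compProd_apply_prod hA hA.compl, two_mul]

lemma IsReversible.snd_compProd [IsMarkovKernel K] [SFinite m] (h : IsReversible K m) :
    (m ⊗ₘ K).snd = m := by
  rw [Measure.snd_compProd]
  exact h.invariant

lemma IsReversible.ae_compProd_of_ae_eq [IsMarkovKernel K] [SFinite m] (h : IsReversible K m)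
    {β : Type*} {f f' : X → β} (hf : f =ᵐ[m] f') :
    ∀ᵐ p ∂(m ⊗ₘ K), f p.1 = f' p.1 ∧ f p.2 = f' p.2 := by
  have h₁ : f ∘ Prod.fst =ᵐ[m ⊗ₘ K] f' ∘ Prod.fst :=
    ae_eq_comp measurable_fst.aemeasurable (by rwa [← Measure.fst, Measure.fst_compProd])
  have h₂ : f ∘ Prod.snd =ᵐ[m ⊗ₘ K] f' ∘ Prod.snd :=
    ae_eq_comp measurable_snd.aemeasurable (by rwa [← Measure.snd, h.snd_compProd])
  filter_upwards [h₁, h₂] with p hp₁ hp₂ using ⟨hp₁, hp₂⟩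

end ProbabilityTheory.Kernel

section Cheeger

variable {X : Type*} [MeasurableSpace X] {K : Kernel X X} {m : Measure X}

lemma cheegerConst_nonneg : 0 ≤ cheegerConst K m :=
  Real.sInf_nonneg fun _ ⟨_, _, _, _, hq⟩ => hq ▸ by unfold boundarySize; positivity

lemma ofReal_cheegerConst_mul_le [IsFiniteMeasure m] {A : Set X}
    (hA : MeasurableSet A) (hAm : m A ≤ m univ / 2) :
    ENNReal.ofReal (cheegerConst K m) * m A ≤ ∫⁻ x in A, K x Aᶜ ∂m := by
  rcases eq_or_ne (m A) 0 with hm0 | hm0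
  · simp [hm0]
  rcases eq_or_ne (∫⁻ x in A, K x Aᶜ ∂m) ∞ with hinf | hfin
  · simp [hinf]
  have hmA : 0 < (m A).toReal := ENNReal.toReal_pos hm0 (measure_ne_top m A)
  have hκ : cheegerConst K m ≤ boundarySize K m A / (m A).toReal :=
    csInf_le ⟨0, fun _ ⟨_, _, _, _, hq⟩ => hq ▸ by unfold boundarySize; positivity⟩
      ⟨A, hA, pos_iff_ne_zero.mpr hm0, hAm, rfl⟩
  rw [← ENNReal.ofReal_toReal (measure_ne_top m A), ← ENNReal.ofReal_mul cheegerConst_nonneg,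
    ← ENNReal.ofReal_toReal hfin]
  exact ENNReal.ofReal_le_ofReal ((le_div_iff₀ hmA).mp hκ)

theorem two_mul_ofReal_cheegerConst_mul_lintegral_le [IsSFiniteKernel K] [IsFiniteMeasure m]
    (hrev : K.IsReversible m) {g : X → ℝ} (hgm : Measurable g) (hg0 : 0 ≤ g)
    (hsupp : m {x | 0 < g x} ≤ m univ / 2) :
    2 * (ENNReal.ofReal (cheegerConst K m) * ∫⁻ x, ENNReal.ofReal (g x) ∂m)
      ≤ ∫⁻ p, ENNReal.ofReal |g p.1 - g p.2| ∂(m ⊗ₘ K) := by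
  set A : ℝ → Set X := fun t => {x | t < g x}
  have hA (t : ℝ) : MeasurableSet (A t) := measurableSet_lt measurable_const hgm
  have hlevel : ∀ t ∈ Ioi (0 : ℝ),
      ENNReal.ofReal (cheegerConst K m) * m (A t) ≤ ∫⁻ x in A t, K x (A t)ᶜ ∂m :=
    fun t ht => ofReal_cheegerConst_mul_le (hA t)
      ((measure_mono fun _ (hx : t < g _) => lt_trans ht hx).trans hsupp)
  calc 2 * (ENNReal.ofReal (cheegerConst K m) * ∫⁻ x, ENNReal.ofReal (g x) ∂m)
      = 2 * ∫⁻ t in Ioi 0, ENNReal.ofReal (cheegerConst K m) * m (A t) := by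
        rw [lintegral_eq_lintegral_meas_lt m (ae_of_all _ hg0) hgm.aemeasurable,
          lintegral_const_mul' _ _ ENNReal.ofReal_ne_top]
    _ ≤ 2 * ∫⁻ t in Ioi 0, ∫⁻ x in A t, K x (A t)ᶜ ∂m := by
        gcongr 2 * ?_
        exact setLIntegral_mono' measurableSet_Ioi hlevel
    _ = ∫⁻ t in Ioi 0, (m ⊗ₘ K) ((Prod.fst ⁻¹' A t) ∆ (Prod.snd ⁻¹' A t)) := by
        simp_rw [hrev.compProd_symmDiff (hA _)]
        rw [lintegral_const_mul' _ _ ENNReal.ofNat_ne_top]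
    _ = ∫⁻ p, ENNReal.ofReal |g p.1 - g p.2| ∂(m ⊗ₘ K) :=
        (lintegral_ofReal_abs_sub_eq_lintegral_measure_symmDiff _ (hgm.comp measurable_fst)
          (hgm.comp measurable_snd) (fun _ => hg0 _) (fun _ => hg0 _)).symm

theorem cheegerConst_mul_integral_le_of_measurable [IsMarkovKernel K] [IsFiniteMeasure m]
    (hrev : K.IsReversible m) {g : X → ℝ} (hgm : Measurable g) (hg : Integrable g m)
    (hg0 : 0 ≤ g) (hsupp : m {x | 0 < g x} ≤ m univ / 2) :
    cheegerConst K m * ∫ x, g x ∂m ≤ (1 / 2) * ∫ p, |g p.1 - g p.2| ∂(m ⊗ₘ K) := by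
  have hint : Integrable (fun p : X × X => |g p.1 - g p.2|) (m ⊗ₘ K) := by
    have h₁ : Integrable (g ∘ Prod.fst) (m ⊗ₘ K) :=
      Integrable.comp_measurable (by rwa [← Measure.fst, Measure.fst_compProd]) measurable_fst
    have h₂ : Integrable (g ∘ Prod.snd) (m ⊗ₘ K) :=
      Integrable.comp_measurable (by rwa [← Measure.snd, hrev.snd_compProd]) measurable_snd
    exact (h₁.sub h₂).abs
  rw [← ENNReal.ofReal_le_ofReal_iff (by positivity), ENNReal.ofReal_mul cheegerConst_nonneg,
    ENNReal.ofReal_mul (by norm_num), ofReal_integral_eq_lintegral_ofReal hg (ae_of_all _ hg0),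
    ofReal_integral_eq_lintegral_ofReal hint (ae_of_all _ fun _ => abs_nonneg _)]
  calc ENNReal.ofReal (cheegerConst K m) * ∫⁻ x, ENNReal.ofReal (g x) ∂m
      = ENNReal.ofReal (1 / 2)
          * (2 * (ENNReal.ofReal (cheegerConst K m) * ∫⁻ x, ENNReal.ofReal (g x) ∂m)) := by
        rw [← mul_assoc, one_div, ENNReal.ofReal_inv_of_pos two_pos, ENNReal.ofReal_ofNat,
          ENNReal.inv_mul_cancel two_ne_zero ENNReal.ofNat_ne_top, one_mul]
    _ ≤ _ := by gcongr; exact two_mul_ofReal_cheegerConst_mul_lintegral_le hrev hgm hg0 hsupp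

end Cheeger

/-- **Lemma 3.5.** Let `K` be a reversible Markov kernel on `X` with finite
reversing measure `m` and Cheeger constant `κ`. If `g ∈ L¹(X,m)` takes values in `[0,∞)`
and `m({g > 0}) ≤ m(X)/2`, then `𝓔₁(g) ≥ κ·‖g‖_{m,1}`. -/
theorem dirichlet_one_ge_cheeger {X : Type*} [MeasurableSpace X]
    (K : Kernel X X) [IsMarkovKernel K] (m : Measure X) [IsFiniteMeasure m]
    (hrev : ∀ f g : X → ℝ, Measurable f → Measurable g →
      (∃ C, ∀ x, |f x| ≤ C) → (∃ C, ∀ x, |g x| ≤ C) →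
      ∫ x, f x * (∫ y, g y ∂(K x)) ∂m = ∫ x, (∫ y, f y ∂(K x)) * g x ∂m)
    (g : X → ℝ) (hg : Integrable g m) (hg0 : ∀ x, 0 ≤ g x)
    (hsupp : m {x | 0 < g x} ≤ m Set.univ / 2) :
    cheegerConst K m * ∫ x, g x ∂m ≤
      (1 / 2) * ∫ p, |g p.1 - g p.2| ∂(m.compProd K) := by
  have hK : K.IsReversible m := Kernel.isReversible_of_integral_mul_comm hrev
  -- the level sets of `g` need not be measurable, so pass to a measurable nonnegative version
  obtain ⟨g', hg'm, hg'0, hgg'⟩ :=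
    hg.1.aemeasurable.exists_ae_eq_range_subset (t := Ici 0) (ae_of_all _ hg0) nonempty_Ici
  have hpos : {x | 0 < g x} =ᵐ[m] {x | 0 < g' x} := hgg'.fun_comp (0 < ·)
  have hdiff : (fun p : X × X => |g p.1 - g p.2|) =ᵐ[m ⊗ₘ K] fun p => |g' p.1 - g' p.2| :=
    (hK.ae_compProd_of_ae_eq hgg').mono fun p hp => by simp only [hp.1, hp.2]
  rw [integral_congr_ae hgg', integral_congr_ae hdiff]
  exact cheegerConst_mul_integral_le_of_measurable hK hg'm (hg.congr hgg')
    (fun x => hg'0 ⟨x, rfl⟩) ((measure_congr hpos).symm.trans_le hsupp)
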